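/- arXiv:2310.13364 — 5 statements merged into one kernel-verified Lean document; each statement's English description precedes it below -/
import Mathlib

section
/- Let A, Z, Y be binary random variables with P(A=1) = λ ∈ (0,1), P(Z=1) = ε ∈ (0,1), P(Z=0|A=0) = τ, and conditional probabilities α = P(Y=1|A=0,Z=0), β = P(Y=1|A=0,Z=1), γ = P(Y=1|A=1,Z=0), δ = P(Y=1|A=1,Z=1). Define StatDisp = P(Y=1|A=1) − P(Y=1|A=0) and ACE = Σ_z (P(Y=1|A=1,Z=z) − P(Y=1|A=0,Z=z))·P(Z=z). Then StatDisp − ACE = (1 − τ − ε)·(α − β − γ + δ + γ/λ − δ/λ). -/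
open MeasureTheory

/-- Probability of an event, as a real number. -/
noncomputable def prb {Ω : Type*} [MeasurableSpace Ω] (μ : Measure Ω) (s : Set Ω) : ℝ :=
  (μ s).toReal

/-- Conditional probability P(s | t) as a real number. -/
noncomputable def cprb {Ω : Type*} [MeasurableSpace Ω] (μ : Measure Ω) (s t : Set Ω) : ℝ :=
  prb μ (s ∩ t) / prb μ t

theorem stmt0 {Ω : Type*} [MeasurableSpace Ω] (μ : Measure Ω) [IsProbabilityMeasure μ]
    (A Z Y : Set Ω) (hAm : MeasurableSet A) (hZm : MeasurableSet Z) (hYm : MeasurableSet Y)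
    (lam eps tau alpha beta gamma delta : ℝ)
    (hlam : prb μ A = lam) (hlam01 : lam ∈ Set.Ioo (0:ℝ) 1)
    (heps : prb μ Z = eps) (heps01 : eps ∈ Set.Ioo (0:ℝ) 1)
    (htau : cprb μ Zᶜ Aᶜ = tau)
    (halpha : cprb μ Y (Aᶜ ∩ Zᶜ) = alpha)
    (hbeta : cprb μ Y (Aᶜ ∩ Z) = beta)
    (hgamma : cprb μ Y (A ∩ Zᶜ) = gamma)
    (hdelta : cprb μ Y (A ∩ Z) = delta)
    (h1 : μ (A ∩ Z) ≠ 0) (h2 : μ (A ∩ Zᶜ) ≠ 0)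
    (h3 : μ (Aᶜ ∩ Z) ≠ 0) (h4 : μ (Aᶜ ∩ Zᶜ) ≠ 0) :
    (cprb μ Y A - cprb μ Y Aᶜ) -
      ((cprb μ Y (A ∩ Z) - cprb μ Y (Aᶜ ∩ Z)) * prb μ Z +
       (cprb μ Y (A ∩ Zᶜ) - cprb μ Y (Aᶜ ∩ Zᶜ)) * prb μ Zᶜ) =
    (1 - tau - eps) * (alpha - beta - gamma + delta + gamma / lam - delta / lam) := by
  obtain ⟨hl0, hl1⟩ := hlam01
  obtain ⟨he0, he1⟩ := heps01
  have hfin : ∀ s : Set Ω, μ s ≠ ⊤ := fun s => measure_ne_top μ s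
  have split : ∀ s t : Set Ω, MeasurableSet t →
      prb μ s = prb μ (s ∩ t) + prb μ (s ∩ tᶜ) := by
    intro s t ht
    have h := measure_inter_add_diff (μ := μ) s ht
    rw [Set.diff_eq] at h
    unfold prb
    rw [← h, ENNReal.toReal_add (hfin _) (hfin _)]
  have huniv : prb μ (Set.univ : Set Ω) = 1 := by simp [prb]
  have hAc : prb μ Aᶜ = 1 - lam := by
    have h := split Set.univ A hAm
    rw [Set.univ_inter, Set.univ_inter, huniv, hlam] at h
    linarith
  have hZc : prb μ Zᶜ = 1 - eps := by
    have h := split Set.univ Z hZm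
    rw [Set.univ_inter, Set.univ_inter, huniv, heps] at h
    linarith
  have hA : prb μ (A ∩ Z) + prb μ (A ∩ Zᶜ) = lam := by
    have h := split A Z hZm; rw [hlam] at h; linarith
  have hAcs : prb μ (Aᶜ ∩ Z) + prb μ (Aᶜ ∩ Zᶜ) = 1 - lam := by
    have h := split Aᶜ Z hZm; rw [hAc] at h; linarith
  have hZeq : prb μ (A ∩ Z) + prb μ (Aᶜ ∩ Z) = eps := by
    have h := split Z A hAm
    rw [Set.inter_comm Z A, Set.inter_comm Z Aᶜ, heps] at h; linarith
  have hYA : prb μ (Y ∩ A) = prb μ (Y ∩ (A ∩ Z)) + prb μ (Y ∩ (A ∩ Zᶜ)) := by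
    have h := split (Y ∩ A) Z hZm
    rw [Set.inter_assoc, Set.inter_assoc] at h; exact h
  have hYAc : prb μ (Y ∩ Aᶜ) = prb μ (Y ∩ (Aᶜ ∩ Z)) + prb μ (Y ∩ (Aᶜ ∩ Zᶜ)) := by
    have h := split (Y ∩ Aᶜ) Z hZm
    rw [Set.inter_assoc, Set.inter_assoc] at h; exact h
  have pos : ∀ s : Set Ω, μ s ≠ 0 → 0 < prb μ s := fun s hs =>
    ENNReal.toReal_pos hs (hfin s)
  have ha := pos _ h1
  have hb := pos _ h2
  have hc := pos _ h3
  have hd := pos _ h4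
  simp only [cprb] at htau halpha hbeta hgamma hdelta ⊢
  rw [div_eq_iff ha.ne'] at hdelta
  rw [div_eq_iff hb.ne'] at hgamma
  rw [div_eq_iff hc.ne'] at hbeta
  rw [div_eq_iff hd.ne'] at halpha
  have hb' : prb μ (A ∩ Zᶜ) = lam - prb μ (A ∩ Z) := by linarith
  have hc' : prb μ (Aᶜ ∩ Z) = eps - prb μ (A ∩ Z) := by linarith
  have hd' : prb μ (Aᶜ ∩ Zᶜ) = 1 - lam - eps + prb μ (A ∩ Z) := by linarith
  have htau' : tau = (1 - lam - eps + prb μ (A ∩ Z)) / (1 - lam) := by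
    rw [← htau, Set.inter_comm Zᶜ Aᶜ, hd', hAc]
  have hbpos : 0 < lam - prb μ (A ∩ Z) := by rw [← hb']; exact hb
  have hcpos : 0 < eps - prb μ (A ∩ Z) := by rw [← hc']; exact hc
  have hdpos : 0 < 1 - lam - eps + prb μ (A ∩ Z) := by rw [← hd']; exact hd
  rw [hYA, hYAc, hlam, hAc, heps, hZc, hdelta, hgamma, hbeta, halpha, hb', hc', hd', htau']
  have h1l : (1 : ℝ) - lam ≠ 0 := by linarith
  field_simp
  ring
end

section
/- Let A, Z, Y be binary random variables with P(A=0) = P(A=1) = 1/2, P(Z=1) = ε, P(Z=0|A=0) = τ, and α = P(Y=1|A=0,Z=0), β = P(Y=1|A=0,Z=1), γ = P(Y=1|A=1,Z=0), δ = P(Y=1|A=1,Z=1). Then the confounding bias StatDisp(Y,A) − ACE(Y,A) equals (1 − τ − ε)·(α − β + γ − δ). -/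
open MeasureTheory

theorem stmt1 {Ω : Type*} [MeasurableSpace Ω] (μ : Measure Ω) [IsProbabilityMeasure μ]
    (A Z Y : Set Ω) (hAm : MeasurableSet A) (hZm : MeasurableSet Z) (hYm : MeasurableSet Y)
    (eps tau alpha beta gamma delta : ℝ)
    (hA : prb μ A = 1/2)
    (heps : prb μ Z = eps)
    (htau : cprb μ Zᶜ Aᶜ = tau)
    (halpha : cprb μ Y (Aᶜ ∩ Zᶜ) = alpha)
    (hbeta : cprb μ Y (Aᶜ ∩ Z) = beta)
    (hgamma : cprb μ Y (A ∩ Zᶜ) = gamma)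
    (hdelta : cprb μ Y (A ∩ Z) = delta)
    (h1 : μ (A ∩ Z) ≠ 0) (h2 : μ (A ∩ Zᶜ) ≠ 0)
    (h3 : μ (Aᶜ ∩ Z) ≠ 0) (h4 : μ (Aᶜ ∩ Zᶜ) ≠ 0) :
    (cprb μ Y A - cprb μ Y Aᶜ) -
      ((cprb μ Y (A ∩ Z) - cprb μ Y (Aᶜ ∩ Z)) * prb μ Z +
       (cprb μ Y (A ∩ Zᶜ) - cprb μ Y (Aᶜ ∩ Zᶜ)) * prb μ Zᶜ) =
    (1 - tau - eps) * (alpha - beta + gamma - delta) := by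
  have hfin : ∀ s : Set Ω, μ s ≠ ⊤ := fun s => measure_ne_top μ s
  have hsplitZ : ∀ s : Set Ω, prb μ s = prb μ (s ∩ Z) + prb μ (s ∩ Zᶜ) := by
    intro s
    unfold prb
    rw [← ENNReal.toReal_add (hfin _) (hfin _), ← Set.diff_eq, measure_inter_add_diff s hZm]
  have hsplitA : ∀ s : Set Ω, prb μ s = prb μ (s ∩ A) + prb μ (s ∩ Aᶜ) := by
    intro s
    unfold prb
    rw [← ENNReal.toReal_add (hfin _) (hfin _), ← Set.diff_eq, measure_inter_add_diff s hAm]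
  have hcompl : ∀ s : Set Ω, MeasurableSet s → prb μ sᶜ = 1 - prb μ s := by
    intro s hs
    unfold prb
    rw [prob_compl_eq_one_sub hs, ENNReal.toReal_sub_of_le prob_le_one ENNReal.one_ne_top,
      ENNReal.toReal_one]
  have hp1 : (0:ℝ) < prb μ (A ∩ Z) := ENNReal.toReal_pos h1 (hfin _)
  have hp2 : (0:ℝ) < prb μ (A ∩ Zᶜ) := ENNReal.toReal_pos h2 (hfin _)
  have hp3 : (0:ℝ) < prb μ (Aᶜ ∩ Z) := ENNReal.toReal_pos h3 (hfin _)
  have hp4 : (0:ℝ) < prb μ (Aᶜ ∩ Zᶜ) := ENNReal.toReal_pos h4 (hfin _)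
  have hAc : prb μ Aᶜ = 1/2 := by rw [hcompl A hAm, hA]; norm_num
  have hZc : prb μ Zᶜ = 1 - eps := by rw [hcompl Z hZm, heps]
  -- cell probabilities
  have e1 : prb μ (A ∩ Z) + prb μ (A ∩ Zᶜ) = 1/2 := by rw [← hsplitZ, hA]
  have e2 : prb μ (Aᶜ ∩ Z) + prb μ (Aᶜ ∩ Zᶜ) = 1/2 := by rw [← hsplitZ, hAc]
  have e3 : prb μ (A ∩ Z) + prb μ (Aᶜ ∩ Z) = eps := by
    have := hsplitA Z
    rw [heps, Set.inter_comm Z A, Set.inter_comm Z Aᶜ] at this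
    linarith
  have e4 : prb μ (Aᶜ ∩ Zᶜ) = tau / 2 := by
    have h := htau
    unfold cprb at h
    rw [hAc, Set.inter_comm Zᶜ Aᶜ] at h
    field_simp at h
    linarith
  have q1 : prb μ (Y ∩ (A ∩ Z)) = delta * prb μ (A ∩ Z) := by
    rw [← hdelta]; unfold cprb; field_simp
  have q2 : prb μ (Y ∩ (A ∩ Zᶜ)) = gamma * prb μ (A ∩ Zᶜ) := by
    rw [← hgamma]; unfold cprb; field_simp
  have q3 : prb μ (Y ∩ (Aᶜ ∩ Z)) = beta * prb μ (Aᶜ ∩ Z) := by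
    rw [← hbeta]; unfold cprb; field_simp
  have q4 : prb μ (Y ∩ (Aᶜ ∩ Zᶜ)) = alpha * prb μ (Aᶜ ∩ Zᶜ) := by
    rw [← halpha]; unfold cprb; field_simp
  have hYA : cprb μ Y A =
      2 * (delta * prb μ (A ∩ Z) + gamma * prb μ (A ∩ Zᶜ)) := by
    unfold cprb
    rw [hA, hsplitZ (Y ∩ A), Set.inter_assoc Y A Z, Set.inter_assoc Y A Zᶜ, q1, q2]
    ring
  have hYAc : cprb μ Y Aᶜ =
      2 * (beta * prb μ (Aᶜ ∩ Z) + alpha * prb μ (Aᶜ ∩ Zᶜ)) := by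
    unfold cprb
    rw [hAc, hsplitZ (Y ∩ Aᶜ), Set.inter_assoc Y Aᶜ Z, Set.inter_assoc Y Aᶜ Zᶜ, q3, q4]
    ring
  rw [hYA, hYAc, hdelta, hgamma, hbeta, halpha, heps, hZc]
  have hv1 : prb μ (A ∩ Z) = eps - 1/2 + tau/2 := by linarith
  have hv2 : prb μ (A ∩ Zᶜ) = 1 - eps - tau/2 := by linarith
  have hv3 : prb μ (Aᶜ ∩ Z) = 1/2 - tau/2 := by linarith
  rw [hv1, hv2, hv3, e4]
  ring
end

section
/- Let A, W, Y be binary random variables with P(A=0) = P(A=1) = 1/2, and let α = P(Y=1|A=0,W=0), β = P(Y=1|A=0,W=1), γ = P(Y=1|A=1,W=0), δ = P(Y=1|A=1,W=1). Then StatDisp_W(Y,A) − StatDisp(Y,A) = (1 − P(W=0|A=0) − P(W=1))·(−α + β − γ + δ), where StatDisp_W(Y,A) = Σ_w (P(Y=1|A=1,W=w) − P(Y=1|A=0,W=w))·P(W=w). -/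
open MeasureTheory

theorem stmt4 {Ω : Type*} [MeasurableSpace Ω] (μ : Measure Ω) [IsProbabilityMeasure μ]
    (A W Y : Set Ω) (hAm : MeasurableSet A) (hWm : MeasurableSet W) (hYm : MeasurableSet Y)
    (alpha beta gamma delta : ℝ)
    (hA : prb μ A = 1/2)
    (halpha : cprb μ Y (Aᶜ ∩ Wᶜ) = alpha)
    (hbeta : cprb μ Y (Aᶜ ∩ W) = beta)
    (hgamma : cprb μ Y (A ∩ Wᶜ) = gamma)
    (hdelta : cprb μ Y (A ∩ W) = delta)
    (h1 : μ (A ∩ W) ≠ 0) (h2 : μ (A ∩ Wᶜ) ≠ 0)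
    (h3 : μ (Aᶜ ∩ W) ≠ 0) (h4 : μ (Aᶜ ∩ Wᶜ) ≠ 0) :
    ((cprb μ Y (A ∩ W) - cprb μ Y (Aᶜ ∩ W)) * prb μ W +
     (cprb μ Y (A ∩ Wᶜ) - cprb μ Y (Aᶜ ∩ Wᶜ)) * prb μ Wᶜ) -
      (cprb μ Y A - cprb μ Y Aᶜ) =
    (1 - cprb μ Wᶜ Aᶜ - prb μ W) * (-alpha + beta - gamma + delta) := by
  have hfin : ∀ t : Set Ω, μ t ≠ ⊤ := fun t => measure_ne_top μ t
  have split : ∀ (u t : Set Ω), MeasurableSet t →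
      prb μ u = prb μ (u ∩ t) + prb μ (u ∩ tᶜ) := by
    intro u t ht
    have h := measure_inter_add_diff (μ := μ) u ht
    rw [Set.diff_eq] at h
    rw [prb, prb, prb, ← h, ENNReal.toReal_add (hfin _) (hfin _)]
  -- positivity
  have hp : prb μ (A ∩ W) ≠ 0 := ENNReal.toReal_ne_zero.mpr ⟨h1, hfin _⟩
  have hq : prb μ (A ∩ Wᶜ) ≠ 0 := ENNReal.toReal_ne_zero.mpr ⟨h2, hfin _⟩
  have hr : prb μ (Aᶜ ∩ W) ≠ 0 := ENNReal.toReal_ne_zero.mpr ⟨h3, hfin _⟩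
  have hs : prb μ (Aᶜ ∩ Wᶜ) ≠ 0 := ENNReal.toReal_ne_zero.mpr ⟨h4, hfin _⟩
  -- complements
  have hAc : prb μ Aᶜ = 1/2 := by
    have h := measure_add_measure_compl (μ := μ) hAm
    have h2 : prb μ A + prb μ Aᶜ = 1 := by
      have := congrArg ENNReal.toReal h
      rwa [ENNReal.toReal_add (hfin _) (hfin _), measure_univ, ENNReal.toReal_one] at this
    linarith
  have hpq : prb μ (A ∩ W) + prb μ (A ∩ Wᶜ) = 1/2 := by
    rw [← split A W hWm]; exact hA
  have hrs : prb μ (Aᶜ ∩ W) + prb μ (Aᶜ ∩ Wᶜ) = 1/2 := by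
    rw [← split Aᶜ W hWm]; exact hAc
  have hW : prb μ W = prb μ (A ∩ W) + prb μ (Aᶜ ∩ W) := by
    rw [split W A hAm, Set.inter_comm W A, Set.inter_comm W Aᶜ]
  have hWc : prb μ Wᶜ = prb μ (A ∩ Wᶜ) + prb μ (Aᶜ ∩ Wᶜ) := by
    rw [split Wᶜ A hAm, Set.inter_comm Wᶜ A, Set.inter_comm Wᶜ Aᶜ]
  -- numerators
  have hYAW : prb μ (Y ∩ (A ∩ W)) = delta * prb μ (A ∩ W) := by
    rw [← hdelta, cprb]; field_simp
  have hYAWc : prb μ (Y ∩ (A ∩ Wᶜ)) = gamma * prb μ (A ∩ Wᶜ) := by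
    rw [← hgamma, cprb]; field_simp
  have hYAcW : prb μ (Y ∩ (Aᶜ ∩ W)) = beta * prb μ (Aᶜ ∩ W) := by
    rw [← hbeta, cprb]; field_simp
  have hYAcWc : prb μ (Y ∩ (Aᶜ ∩ Wᶜ)) = alpha * prb μ (Aᶜ ∩ Wᶜ) := by
    rw [← halpha, cprb]; field_simp
  have hYA : cprb μ Y A = 2 * (delta * prb μ (A ∩ W) + gamma * prb μ (A ∩ Wᶜ)) := by
    rw [cprb, split (Y ∩ A) W hWm, Set.inter_assoc, Set.inter_assoc, hYAW, hYAWc, hA]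
    ring
  have hYAc : cprb μ Y Aᶜ = 2 * (beta * prb μ (Aᶜ ∩ W) + alpha * prb μ (Aᶜ ∩ Wᶜ)) := by
    rw [cprb, split (Y ∩ Aᶜ) W hWm, Set.inter_assoc, Set.inter_assoc, hYAcW, hYAcWc, hAc]
    ring
  have hWcAc : cprb μ Wᶜ Aᶜ = 2 * prb μ (Aᶜ ∩ Wᶜ) := by
    rw [cprb, Set.inter_comm Wᶜ Aᶜ, hAc]; ring
  rw [hdelta, hgamma, hbeta, halpha, hYA, hYAc, hWcAc, hW, hWc]
  linear_combination (-(alpha + gamma)) * hpq + (-alpha + 2*beta - gamma + 2*delta) * hrs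
end

section
/- In the standardized linear collider model with Var(A)=Var(Y)=Var(W)=1, the selection bias β_{ya.w} − β_{ya} equals ε·(α²η + α³ε − η − αε)/(1 − (η + αε)²); in particular, the selection bias vanishes when ε = 0. -/
/-!
Covariance is bilinear and vanishes between independent square-integrable variables, so the
structural equations give `Cov(Y,A) = α Var A`, `Cov(W,A) = η Var A + ε Cov(Y,A)` and
`Cov(Y,W) = η Cov(Y,A) + ε Var Y`. With unit variances the selection bias becomes
`ε (α² - 1)(η + αε) / (1 - (η + αε)²)`, which visibly vanishes at `ε = 0`.
-/

open MeasureTheory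

/-- Covariance of two real random variables. -/
noncomputable def cov' {Ω : Type*} [MeasurableSpace Ω] (μ : Measure Ω) (X Y : Ω → ℝ) : ℝ :=
  ∫ ω, (X ω - ∫ x, X x ∂μ) * (Y ω - ∫ x, Y x ∂μ) ∂μ

/-- Variance of a real random variable. -/
noncomputable def var' {Ω : Type*} [MeasurableSpace Ω] (μ : Measure Ω) (X : Ω → ℝ) : ℝ :=
  cov' μ X X

open ProbabilityTheory

lemma cov'_eq_covariance {Ω : Type*} [MeasurableSpace Ω] (μ : Measure Ω) (X Y : Ω → ℝ) :
    cov' μ X Y = cov[X, Y; μ] :=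
  rfl

section Bilinear

variable {Ω : Type*} [MeasurableSpace Ω] {μ : Measure Ω} [IsFiniteMeasure μ] {X U Z : Ω → ℝ}

lemma covariance_const_mul_add_left (hX : MemLp X 2 μ) (hU : MemLp U 2 μ) (hZ : MemLp Z 2 μ)
    (c : ℝ) : cov[fun ω ↦ c * X ω + U ω, Z; μ] = c * cov[X, Z; μ] + cov[U, Z; μ] := by
  rw [← covariance_const_mul_left]
  exact covariance_add_left (hX.const_mul c) hU hZ

lemma covariance_const_mul_add_right (hX : MemLp X 2 μ) (hU : MemLp U 2 μ) (hZ : MemLp Z 2 μ)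
    (c : ℝ) : cov[Z, fun ω ↦ c * X ω + U ω; μ] = c * cov[Z, X; μ] + cov[Z, U; μ] := by
  rw [covariance_comm, covariance_const_mul_add_left hX hU hZ, covariance_comm X,
    covariance_comm U]

end Bilinear

section ColliderModel

variable {Ω : Type*} [MeasurableSpace Ω] {μ : Measure Ω} [IsFiniteMeasure μ]
  {A Y U W : Ω → ℝ} {α η ε : ℝ}

lemma covariance_of_eq_const_mul_add (hA : MemLp A 2 μ) (hU : MemLp U 2 μ)
    (hUA : cov[U, A; μ] = 0) (hY : ∀ ω, Y ω = α * A ω + U ω) : cov[Y, A; μ] = α * cov[A, A; μ] := by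
  rw [funext hY, covariance_const_mul_add_left hA hU hA, hUA, add_zero]

lemma covariance_collider_left (hA : MemLp A 2 μ) (hY : MemLp Y 2 μ) (hU : MemLp U 2 μ)
    (hUA : cov[U, A; μ] = 0) (hW : ∀ ω, W ω = η * A ω + ε * Y ω + U ω) :
    cov[W, A; μ] = η * cov[A, A; μ] + ε * cov[Y, A; μ] := by
  have hW' : W = fun ω ↦ η * A ω + (ε * Y ω + U ω) := funext fun ω ↦ by rw [hW, add_assoc]
  rw [hW', covariance_const_mul_add_left (U := fun ω ↦ ε * Y ω + U ω) hA
      ((hY.const_mul ε).add hU) hA,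
    covariance_const_mul_add_left hY hU hA, hUA, add_zero]

lemma covariance_collider_right (hA : MemLp A 2 μ) (hY : MemLp Y 2 μ) (hU : MemLp U 2 μ)
    (hYU : cov[Y, U; μ] = 0) (hW : ∀ ω, W ω = η * A ω + ε * Y ω + U ω) :
    cov[Y, W; μ] = η * cov[Y, A; μ] + ε * cov[Y, Y; μ] := by
  have hW' : W = fun ω ↦ η * A ω + (ε * Y ω + U ω) := funext fun ω ↦ by rw [hW, add_assoc]
  rw [hW', covariance_const_mul_add_right (U := fun ω ↦ ε * Y ω + U ω) hA
      ((hY.const_mul ε).add hU) hY,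
    covariance_const_mul_add_right hY hU hY, hYU, add_zero]

end ColliderModel

lemma collider_selection_bias_eq (α η ε : ℝ) (h : (η + α * ε) ^ 2 ≠ 1) :
    (α - (η * α + ε) * (η + α * ε)) / (1 - (η + α * ε) ^ 2) - α =
      ε * (α ^ 2 * η + α ^ 3 * ε - η - α * ε) / (1 - (η + α * ε) ^ 2) := by
  have hd : 1 - (η + α * ε) ^ 2 ≠ 0 := sub_ne_zero.mpr h.symm
  field_simp
  ring

theorem stmt13_general {Ω : Type*} [MeasurableSpace Ω] (μ : Measure Ω) [IsProbabilityMeasure μ]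
    (Ua Uy Uw A Y W : Ω → ℝ) (α η ε : ℝ)
    (hind : iIndepFun ![Ua, Uy, Uw] μ)
    (hUa2 : MemLp Ua 2 μ) (hUy2 : MemLp Uy 2 μ) (hUw2 : MemLp Uw 2 μ)
    (hvA : var' μ A = 1) (hvY : var' μ Y = 1)
    (hA : ∀ ω, A ω = Ua ω)
    (hY : ∀ ω, Y ω = α * A ω + Uy ω)
    (hW : ∀ ω, W ω = η * A ω + ε * Y ω + Uw ω)
    (hden : (η + α * ε)^2 < 1) :
    (cov' μ Y A - cov' μ Y W * cov' μ W A) / (1 - (cov' μ W A)^2) - cov' μ Y A =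
      ε * (α^2 * η + α^3 * ε - η - α * ε) / (1 - (η + α * ε)^2) ∧
    (ε = 0 →
      (cov' μ Y A - cov' μ Y W * cov' μ W A) / (1 - (cov' μ W A)^2) - cov' μ Y A = 0) := by
  obtain rfl : A = Ua := funext hA
  have hY2 : MemLp Y 2 μ := funext hY ▸ (hUa2.const_mul α).add hUy2
  have hUyA : cov[Uy, A; μ] = 0 := by
    simpa using (hind.indepFun (show (1 : Fin 3) ≠ 0 by decide)).covariance_eq_zero hUy2 hUa2
  have hUwA : cov[Uw, A; μ] = 0 := by
    simpa using (hind.indepFun (show (2 : Fin 3) ≠ 0 by decide)).covariance_eq_zero hUw2 hUa2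
  have hUyUw : cov[Uy, Uw; μ] = 0 := by
    simpa using (hind.indepFun (show (1 : Fin 3) ≠ 2 by decide)).covariance_eq_zero hUy2 hUw2
  have hYUw : cov[Y, Uw; μ] = 0 := by
    rw [funext hY, covariance_const_mul_add_left hUa2 hUy2 hUw2, covariance_comm, hUwA, hUyUw]
    ring
  simp only [var', cov'_eq_covariance] at hvA hvY ⊢
  have hYA : cov[Y, A; μ] = α := by
    rw [covariance_of_eq_const_mul_add hUa2 hUy2 hUyA hY, hvA, mul_one]
  rw [covariance_collider_left hUa2 hY2 hUw2 hUwA hW,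
    covariance_collider_right hUa2 hY2 hUw2 hYUw hW, hYA, hvA, hvY, mul_one, mul_one, mul_comm ε α]
  have bias := collider_selection_bias_eq α η ε hden.ne
  exact ⟨bias, fun hε ↦ by rw [bias, hε, zero_mul, zero_div]⟩

/-- Standardized linear collider model: selection bias equals
`ε(α²η + α³ε − η − αε)/(1 − (η + αε)²)`; in particular it vanishes when `ε = 0`. -/
theorem stmt13 {Ω : Type*} [MeasurableSpace Ω] (μ : Measure Ω) [IsProbabilityMeasure μ]
    (Ua Uy Uw A Y W : Ω → ℝ) (α η ε : ℝ)
    (hUam : Measurable Ua) (hUym : Measurable Uy) (hUwm : Measurable Uw)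
    (hind : iIndepFun ![Ua, Uy, Uw] μ)
    (hUa2 : MemLp Ua 2 μ) (hUy2 : MemLp Uy 2 μ) (hUw2 : MemLp Uw 2 μ)
    (hma : ∫ ω, Ua ω ∂μ = 0) (hmy : ∫ ω, Uy ω ∂μ = 0) (hmw : ∫ ω, Uw ω ∂μ = 0)
    (hvA : var' μ A = 1) (hvY : var' μ Y = 1) (hvW : var' μ W = 1)
    (hA : ∀ ω, A ω = Ua ω)
    (hY : ∀ ω, Y ω = α * A ω + Uy ω)
    (hW : ∀ ω, W ω = η * A ω + ε * Y ω + Uw ω)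
    (hden : (η + α * ε)^2 < 1) :
    (cov' μ Y A - cov' μ Y W * cov' μ W A) / (1 - (cov' μ W A)^2) - cov' μ Y A =
      ε * (α^2 * η + α^3 * ε - η - α * ε) / (1 - (η + α * ε)^2) ∧
    (ε = 0 →
      (cov' μ Y A - cov' μ Y W * cov' μ W A) / (1 - (cov' μ W A)^2) - cov' μ Y A = 0) :=
  stmt13_general μ Ua Uy Uw A Y W α η ε hind hUa2 hUy2 hUw2 hvA hvY hA hY hW hden
end

section
/- Let A, B, Y be binary random variables with A and B independent and all conditioning events having positive probability. Then P(Y=1|A=1) − P(Y=1|A=0) = [P(Y=1|A=1,B=0) − P(Y=1|A=0,B=0)] + P(B=1)·Int(A,B), where Int(A,B) = P(Y=1|A=1,B=1) − P(Y=1|A=0,B=1) − P(Y=1|A=1,B=0) + P(Y=1|A=0,B=0). -/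
/-!
Condition on `B`. Independence makes `B` have probability `P(B)` inside `A` and inside `Aᶜ`
alike, so `P(Y=1|A=a) = P(B) · P(Y=1|A=a,B=1) + (1 - P(B)) · P(Y=1|A=a,B=0)` for both values
of `a`, with the same weights; subtracting the two expansions gives the right-hand side.
-/

open MeasureTheory

section

variable {Ω : Type*} [MeasurableSpace Ω] {μ : Measure Ω}

lemma prb_inter_add_prb_inter_compl [IsFiniteMeasure μ] (s : Set Ω) {t : Set Ω}
    (ht : MeasurableSet t) : prb μ (s ∩ t) + prb μ (s ∩ tᶜ) = prb μ s := by
  rw [← Set.sdiff_eq]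
  exact measureReal_inter_add_sdiff ht

/-- Also true when `prb μ t = 0`, since then `s ∩ t` is null too. -/
lemma prb_inter_eq_cprb_mul [IsFiniteMeasure μ] (s t : Set Ω) :
    prb μ (s ∩ t) = cprb μ s t * prb μ t := by
  by_cases ht : prb μ t = 0
  · rw [ht, mul_zero]
    exact measureReal_mono_null Set.inter_subset_right ht
  · rw [cprb, div_mul_cancel₀ _ ht]

lemma prb_inter_compl_of_indep [IsProbabilityMeasure μ] {s t : Set Ω} (ht : MeasurableSet t)
    (hst : prb μ (s ∩ t) = prb μ s * prb μ t) : prb μ (s ∩ tᶜ) = prb μ s * (1 - prb μ t) := by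
  have hsplit := prb_inter_add_prb_inter_compl (μ := μ) s ht
  linear_combination hsplit - hst

lemma prb_compl_inter_of_indep [IsProbabilityMeasure μ] {s t : Set Ω} (hs : MeasurableSet s)
    (hst : prb μ (s ∩ t) = prb μ s * prb μ t) : prb μ (sᶜ ∩ t) = prb μ sᶜ * prb μ t := by
  rw [Set.inter_comm, mul_comm, prb_inter_compl_of_indep hs (by rwa [Set.inter_comm, mul_comm])]
  simp only [prb, ← Measure.real_def, probReal_compl_eq_one_sub hs]

/-- No positivity is needed: if `C` is null, both sides vanish (`x / 0 = 0`). -/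
lemma cprb_eq_of_indep [IsProbabilityMeasure μ] (Y : Set Ω) {B C : Set Ω}
    (hB : MeasurableSet B) (hCB : prb μ (C ∩ B) = prb μ C * prb μ B) :
    cprb μ Y C = prb μ B * cprb μ Y (C ∩ B) + (1 - prb μ B) * cprb μ Y (C ∩ Bᶜ) := by
  have hCBc := prb_inter_compl_of_indep hB hCB
  by_cases hC : prb μ C = 0
  · simp [cprb, hC, hCB, hCBc]
  rw [cprb, div_eq_iff hC]
  calc prb μ (Y ∩ C)
      = prb μ (Y ∩ (C ∩ B)) + prb μ (Y ∩ (C ∩ Bᶜ)) := by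
        simp only [← Set.inter_assoc, prb_inter_add_prb_inter_compl _ hB]
    _ = (prb μ B * cprb μ Y (C ∩ B) + (1 - prb μ B) * cprb μ Y (C ∩ Bᶜ)) * prb μ C := by
        rw [prb_inter_eq_cprb_mul Y, prb_inter_eq_cprb_mul Y, hCB, hCBc]
        ring

end

theorem stmt17_general {Ω : Type*} [MeasurableSpace Ω] (μ : Measure Ω) [IsProbabilityMeasure μ]
    (A B Y : Set Ω) (hAm : MeasurableSet A) (hBm : MeasurableSet B)
    (hind : prb μ (A ∩ B) = prb μ A * prb μ B) :
    cprb μ Y A - cprb μ Y Aᶜ =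
      (cprb μ Y (A ∩ Bᶜ) - cprb μ Y (Aᶜ ∩ Bᶜ)) +
      prb μ B *
        (cprb μ Y (A ∩ B) - cprb μ Y (Aᶜ ∩ B) - cprb μ Y (A ∩ Bᶜ) + cprb μ Y (Aᶜ ∩ Bᶜ)) := by
  rw [cprb_eq_of_indep Y hBm hind, cprb_eq_of_indep Y hBm (prb_compl_inter_of_indep hAm hind)]
  ring

/-- With `A` and `B` independent, the statistical disparity w.r.t. `A` decomposes into the
interaction-free disparity plus `P(B=1)` times the additive interaction term. -/
theorem stmt17 {Ω : Type*} [MeasurableSpace Ω] (μ : Measure Ω) [IsProbabilityMeasure μ]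
    (A B Y : Set Ω) (hAm : MeasurableSet A) (hBm : MeasurableSet B) (hYm : MeasurableSet Y)
    (hind : prb μ (A ∩ B) = prb μ A * prb μ B)
    (hA : μ A ≠ 0) (hAc : μ Aᶜ ≠ 0)
    (h1 : μ (A ∩ B) ≠ 0) (h2 : μ (A ∩ Bᶜ) ≠ 0)
    (h3 : μ (Aᶜ ∩ B) ≠ 0) (h4 : μ (Aᶜ ∩ Bᶜ) ≠ 0) :
    cprb μ Y A - cprb μ Y Aᶜ =
      (cprb μ Y (A ∩ Bᶜ) - cprb μ Y (Aᶜ ∩ Bᶜ)) +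
      prb μ B *
        (cprb μ Y (A ∩ B) - cprb μ Y (Aᶜ ∩ B) - cprb μ Y (A ∩ Bᶜ) + cprb μ Y (Aᶜ ∩ Bᶜ)) :=
  stmt17_general μ A B Y hAm hBm hind
end
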